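/- Let C be a small category satisfying (C1), (C2) and (C3), and suppose every morphism of C is definable by self-intersections. Then for every object A of C and every subgroup G of Aut_C(A), the presheaf on C^op given on objects by X ↦ Hom_C(A, X)∕G, the quotient of the hom-set by the action of G by precomposition, is a sheaf for the atomic topology J_at on C^op. -/

import Mathlib

open CategoryTheory Limits Opposite

universe w v u

/-- A chain indexed by a preorder stabilizes if there is an index from which on
all the morphisms of the chain are isomorphisms. -/
def ChainStabilizes {J : Type w} [Preorder J] {C : Type u} [Category.{v} C]
    (F : J ⥤ C) : Prop :=
  ∃ i : J, ∀ j : J, ∀ h : i ≤ j, IsIso (F.map (homOfLE h))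

/-- A category is co-well-founded if every chain indexed by a (nonempty) well-ordered
poset stabilizes. -/
def CoWellFounded (C : Type u) [Category.{v} C] : Prop :=
  ∀ (J : Type w) (_ : LinearOrder J) (_ : WellFoundedLT J) (_ : Nonempty J)
    (F : J ⥤ C), ChainStabilizes F

/-- An object is finitely presentable if its covariant Hom functor preserves
filtered colimits. -/
def IsFinitelyPresentableObj {C : Type u} [Category.{v} C] (X : C) : Prop :=
  ∀ (J : Type w) (_ : SmallCategory J) (_ : IsFiltered J),
    Nonempty (PreservesColimitsOfShape J (coyoneda.obj (op X)))

/-- A category is locally finitely presentable if it is cocomplete and there is a small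
family of finitely presentable objects such that every object is a filtered colimit of
objects of this family. -/
def LocallyFinitelyPresentable (C : Type u) [Category.{v} C] : Prop :=
  HasColimitsOfSize.{w, w} C ∧
  ∃ (ι : Type w) (G : ι → C),
    (∀ i, IsFinitelyPresentableObj.{w} (G i)) ∧
    ∀ X : C, ∃ (J : Type w) (_ : SmallCategory J) (_ : IsFiltered J) (D : J ⥤ C)
      (c : Cocone D), Nonempty (IsColimit c) ∧ Nonempty (c.pt ≅ X) ∧
      ∀ j : J, ∃ i : ι, Nonempty (D.obj j ≅ G i)

/-- An atom of a topos: an object which is not initial and whose only subobjects are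
the initial one and itself. -/
def IsAtomObj {C : Type u} [Category.{v} C] [HasInitial C] (X : C) : Prop :=
  (¬ Nonempty (X ≅ ⊥_ C)) ∧
  ∀ S : Subobject X, Nonempty ((S : C) ≅ ⊥_ C) ∨ S = ⊤

/-- A category has amalgamation (the left Ore condition) if every span admits a cocone. -/
def HasAmalgamation (C : Type u) [Category.{v} C] : Prop :=
  ∀ {X A B : C} (f : X ⟶ A) (g : X ⟶ B), ∃ (W : C) (h : A ⟶ W) (k : B ⟶ W), f ≫ h = g ≫ k

/-- `J` is the atomic topology: its covering sieves are exactly the nonempty sieves. -/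
def IsAtomicTopology {C : Type u} [Category.{v} C] (J : GrothendieckTopology C) : Prop :=
  ∀ (X : C) (S : Sieve X), S ∈ J X ↔ ∃ (Y : C) (f : Y ⟶ X), S f

/-- Condition (C2'): for every pullback square `X∩Y → X → Z`, `X∩Y → Y → Z` and every
pair `u, v : Z ⇉ A` agreeing on `X∩Y`, there are `w : A → A'` and a finite sequence of
morphisms `Z → A'` from `u ≫ w` to `v ≫ w` in which consecutive morphisms agree on `X`
or on `Y`. -/
def CondC2' (C : Type u) [Category.{v} C] : Prop :=
  ∀ {W X Y Z : C} (fst : W ⟶ X) (snd : W ⟶ Y) (f : X ⟶ Z) (g : Y ⟶ Z),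
    IsPullback fst snd f g →
    ∀ {A : C} (u v : Z ⟶ A), (fst ≫ f) ≫ u = (fst ≫ f) ≫ v →
      ∃ (A' : C) (w : A ⟶ A') (n : ℕ) (k : Fin (n + 1) → (Z ⟶ A')),
        k 0 = u ≫ w ∧ k (Fin.last n) = v ≫ w ∧
        ∀ i : Fin n, f ≫ k i.castSucc = f ≫ k i.succ ∨ g ≫ k i.castSucc = g ≫ k i.succ
universe v₂ u₂

/-- The composite of the Yoneda embedding `Cᵒᵖ ⥤ (Cᵒᵖᵒᵖ ⥤ Type u)` with sheafification
for a topology `J` on `Cᵒᵖ`. -/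
noncomputable def atomicYoneda {C : Type u} [SmallCategory C]
    (J : GrothendieckTopology Cᵒᵖ) : Cᵒᵖ ⥤ Sheaf J (Type u) :=
  yoneda ⋙ presheafToSheaf J (Type u)

/-- Port helper: the initial object of `Sheaf J (Type u)`, given explicitly because instance
search now runs forever on it. -/
instance atomicSheafHasInitial {C : Type u} [SmallCategory C] (J : GrothendieckTopology Cᵒᵖ) :
    HasInitial (Sheaf J (Type u)) :=
  Sheaf.instHasColimitsOfShape

/-- Condition (C1): the composite of Yoneda with sheafification is fully faithful and
sends every object of `Cᵒᵖ` to an atom. -/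
def CondC1 {C : Type u} [SmallCategory C] (J : GrothendieckTopology Cᵒᵖ) : Prop :=
  Nonempty (atomicYoneda J).FullyFaithful ∧
  ∀ n : Cᵒᵖ, IsAtomObj ((atomicYoneda J).obj n)

/-- Condition (C2): `Cᵒᵖ` has pushouts and the composite of Yoneda with sheafification
preserves them. -/
def CondC2 {C : Type u} [SmallCategory C] (J : GrothendieckTopology Cᵒᵖ) : Prop :=
  HasPushouts Cᵒᵖ ∧
  ∀ {W X Y Z : Cᵒᵖ} (f : W ⟶ X) (g : W ⟶ Y) (inl : X ⟶ Z) (inr : Y ⟶ Z),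
    IsPushout f g inl inr →
    IsPushout ((atomicYoneda J).map f) ((atomicYoneda J).map g)
      ((atomicYoneda J).map inl) ((atomicYoneda J).map inr)

/-- Condition (C3): `C` is well-founded, i.e. `Cᵒᵖ` is co-well-founded. -/
def CondC3 (C : Type u) [SmallCategory C] : Prop :=
  CoWellFounded.{u} Cᵒᵖ

/-- Condition (C4): the automorphism group of every object of `C` is Noetherian: every
ascending chain of subgroups stabilizes. -/
def CondC4 (C : Type u) [SmallCategory C] : Prop :=
  ∀ X : C, ∀ c : ℕ → Subgroup (Aut X), Monotone c → ∃ N, ∀ n, N ≤ n → c n = c N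

/-- `π : L.obj m ⟶ Q` exhibits `Q` as the quotient of `L.obj m` by the subgroup
`G ⊆ Aut m`, i.e. as the common coequalizer of all the pairs `(L.map σ, id)`, `σ ∈ G`. -/
def IsGroupQuotientAlong {C : Type u} [Category.{v} C] {D : Type u₂} [Category.{v₂} D]
    (L : C ⥤ D) {m : C} (G : Subgroup (Aut m)) {Q : D} (π : L.obj m ⟶ Q) : Prop :=
  (∀ σ ∈ G, L.map σ.hom ≫ π = π) ∧
  ∀ (Q' : D) (π' : L.obj m ⟶ Q'), (∀ σ ∈ G, L.map σ.hom ≫ π' = π') →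
    ∃! t : Q ⟶ Q', π ≫ t = π'

/-- A morphism `f : A ⟶ B` is definable by self-intersections: every `u : Y ⟶ B` such
that, for all pairs `α, β : B ⇉ X` equalized by `f`, `u ≫ β` factors as `v ≫ α`,
factors through `f`. -/
def DefinableBySelfIntersections {C : Type u} [Category.{v} C] {A B : C}
    (f : A ⟶ B) : Prop :=
  ∀ {Y : C} (u : Y ⟶ B),
    (∀ {X : C} (α β : B ⟶ X), f ≫ α = f ≫ β → ∃ v : Y ⟶ B, u ≫ β = v ≫ α) →
    ∃ t : Y ⟶ A, t ≫ f = u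

/-- The presheaf on `Cᵒᵖ` sending `X` to the quotient `Hom_C(A, X)∕G` of the hom-set by
the precomposition action of a subgroup `G ⊆ Aut A`. -/
def homQuotPre {C : Type u} [Category.{v} C] (A : C) (G : Subgroup (Aut A)) :
    (Cᵒᵖ)ᵒᵖ ⥤ Type v where
  obj X := Quot (fun f g : (A ⟶ X.unop.unop) => ∃ σ ∈ G, σ.hom ≫ f = g)
  map u := TypeCat.ofHom (Quot.map (fun f => f ≫ u.unop.unop)
    (by rintro f g ⟨σ, hσ, rfl⟩; exact ⟨σ, hσ, by simp⟩))
  map_id X := by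
    refine ConcreteCategory.hom_ext _ _ fun x => ?_
    obtain ⟨f, rfl⟩ := Quot.exists_rep x
    show Quot.mk _ (f ≫ (𝟙 X).unop.unop) = Quot.mk _ f
    simp
  map_comp u v := by
    refine ConcreteCategory.hom_ext _ _ fun x => ?_
    obtain ⟨f, rfl⟩ := Quot.exists_rep x
    show Quot.mk _ (f ≫ (u ≫ v).unop.unop) = Quot.mk _ ((f ≫ u.unop.unop) ≫ v.unop.unop)
    simp

/-!
For the atomic topology, a presheaf whose restriction maps are injective is a sheaf as soon as
every element invariant under the kernel pair of a map descends along it: any two maps with a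
common codomain have a common refinement. For `Hom(A, -)∕G` the restriction maps are injective
because (C1) makes every morphism of `C` monic (ℓ sends it to a map between atoms, hence to an
epimorphism, and ℓ is faithful), and descent is exactly definability by self-intersections.
-/

section AtomicTopology

variable {D : Type*} [Category D] {J : GrothendieckTopology D}

lemma IsAtomicTopology.exists_comm_sq (hJ : IsAtomicTopology J) {X Y Z : D}
    (f : Y ⟶ X) (g : Z ⟶ X) : ∃ (W : D) (p : W ⟶ Z) (q : W ⟶ Y), p ≫ g = q ≫ f := by
  have hf : Sieve.generate (Presieve.singleton f) ∈ J X :=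
    (hJ X _).2 ⟨Y, f, Sieve.le_generate _ Y f (Presieve.singleton_self f)⟩
  obtain ⟨W, p, T, q, f', ⟨⟩, hpq⟩ := (hJ Z _).1 (J.pullback_stable g hf)
  exact ⟨W, p, q, hpq.symm⟩

lemma IsAtomicTopology.isSheaf_of_injective_of_exists (hJ : IsAtomicTopology J)
    (P : Dᵒᵖ ⥤ Type*) (hinj : ∀ {X Y : D} (f : Y ⟶ X), Function.Injective (P.map f.op))
    (hdesc : ∀ {X Y : D} (f : Y ⟶ X) (y : P.obj (op Y)),
      (∀ {Z : D} (g h : Z ⟶ Y), g ≫ f = h ≫ f → P.map g.op y = P.map h.op y) →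
      ∃ x, P.map f.op x = y) :
    Presheaf.IsSheaf J P := by
  rw [isSheaf_iff_isSheaf_of_type]
  intro X S hS x hx
  obtain ⟨Y₀, f₀, hf₀⟩ := (hJ X S).1 hS
  obtain ⟨s, hs⟩ := hdesc f₀ (x f₀ hf₀) fun g h hgh => hx g h hf₀ hf₀ hgh
  refine ⟨s, fun Y f hf => ?_, fun t ht => hinj f₀ ((ht f₀ hf₀).trans hs.symm)⟩
  obtain ⟨W, p, q, hpq⟩ := hJ.exists_comm_sq f₀ f
  refine hinj p ?_
  calc P.map p.op (P.map f.op s) = P.map q.op (P.map f₀.op s) := by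
        simp only [← Functor.map_comp_apply, ← op_comp, hpq]
    _ = P.map p.op (x f hf) := by rw [hs, hx p q hf hf₀ hpq]

end AtomicTopology

section CondC1

variable {C : Type u} [SmallCategory C] {J : GrothendieckTopology Cᵒᵖ}

/-- The image of `φ` is a subobject of the atom `Y`; it cannot be initial, since the atom `X`
maps to it and initial objects of a topos are strict. -/
lemma epi_of_isAtomObj {X Y : Sheaf J (Type u)} (hX : IsAtomObj X) (hY : IsAtomObj Y)
    (φ : X ⟶ Y) : Epi φ := by
  rcases hY.2 (Subobject.mk (Sheaf.imageι φ)) with ⟨⟨e⟩⟩ | h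
  · exact (hX.1 ⟨asIso (Sheaf.toImage φ ≫ (Subobject.underlyingIso _).inv ≫ e.hom)⟩).elim
  · have : IsIso (Sheaf.imageι φ) := (Subobject.isIso_iff_mk_eq_top _).2 h
    rw [← Sheaf.toImage_ι φ]
    exact epi_comp _ _

lemma CondC1.mono (h1 : CondC1 J) {X Y : C} (f : X ⟶ Y) : Mono f := by
  obtain ⟨hff⟩ := h1.1
  have := hff.faithful
  have := epi_of_isAtomObj (h1.2 _) (h1.2 _) ((atomicYoneda J).map f.op)
  exact (op_epi_iff f).1 ((atomicYoneda J).epi_of_epi_map this)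

end CondC1

section HomQuot

variable {C : Type u} [Category.{v} C] {A : C} (G : Subgroup (Aut A))

lemma homQuotPre_mk_eq_iff {Z : C} (a b : A ⟶ Z) :
    Quot.mk (fun f g : A ⟶ Z => ∃ σ ∈ G, σ.hom ≫ f = g) a = Quot.mk _ b ↔
      ∃ σ ∈ G, σ.hom ≫ a = b := by
  refine ⟨fun h => ?_, fun h => Quot.sound h⟩
  refine (Equivalence.eqvGen_iff ⟨fun f => ⟨1, G.one_mem, Category.id_comp f⟩, ?_, ?_⟩).1
    (Quot.eq.1 h)
  · rintro f g ⟨σ, hσ, rfl⟩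
    exact ⟨σ⁻¹, G.inv_mem hσ, Iso.inv_hom_id_assoc (σ : A ≅ A) f⟩
  · rintro f g h ⟨σ, hσ, rfl⟩ ⟨τ, hτ, rfl⟩
    exact ⟨σ * τ, G.mul_mem hσ hτ, Category.assoc τ.hom σ.hom f⟩

lemma homQuotPre_map_injective {X Y : Cᵒᵖ} (f : Y ⟶ X) [Mono f.unop] :
    Function.Injective ((homQuotPre A G).map f.op) := by
  rintro ⟨a⟩ ⟨b⟩ h
  obtain ⟨σ, hσ, e⟩ := (homQuotPre_mk_eq_iff G (a ≫ f.unop) (b ≫ f.unop)).1 h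
  exact Quot.sound ⟨σ, hσ, Mono.right_cancellation _ _ (by simpa using e)⟩

lemma homQuotPre_exists_map_eq {X Y : Cᵒᵖ} (f : Y ⟶ X)
    (hf : DefinableBySelfIntersections f.unop) (y : (homQuotPre A G).obj (op Y))
    (hy : ∀ {Z : Cᵒᵖ} (g h : Z ⟶ Y), g ≫ f = h ≫ f →
      (homQuotPre A G).map g.op y = (homQuotPre A G).map h.op y) :
    ∃ x, (homQuotPre A G).map f.op x = y := by
  obtain ⟨u⟩ := y
  obtain ⟨t, rfl⟩ := hf u fun α β hαβ => by
    obtain ⟨σ, hσ, e⟩ := (homQuotPre_mk_eq_iff G (u ≫ α) (u ≫ β)).1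
      (hy α.op β.op (Quiver.Hom.unop_inj hαβ))
    exact ⟨σ.hom ≫ u, by simpa using e.symm⟩
  exact ⟨Quot.mk _ t, rfl⟩

end HomQuot

theorem stmt8_general {C : Type u} [SmallCategory C] (J : GrothendieckTopology Cᵒᵖ)
    (hJ : IsAtomicTopology J)
    (h1 : CondC1 J)
    (hdef : ∀ {A B : C} (f : A ⟶ B), DefinableBySelfIntersections f) :
    ∀ (A : C) (G : Subgroup (Aut A)), Presheaf.IsSheaf J (homQuotPre A G) :=
  fun _ G => hJ.isSheaf_of_injective_of_exists _
    (fun f => have := h1.mono f.unop; homQuotPre_map_injective G f)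
    (fun f => homQuotPre_exists_map_eq G f (hdef f.unop))

/-- under (C1), (C2), (C3), if every morphism of `C` is definable by
self-intersections, then for every object `A` and subgroup `G ⊆ Aut A` the presheaf
`X ↦ Hom_C(A, X)∕G` is a sheaf for the atomic topology on `Cᵒᵖ`. -/
theorem stmt8 {C : Type u} [SmallCategory C] (J : GrothendieckTopology Cᵒᵖ)
    (hJ : IsAtomicTopology J)
    (h1 : CondC1 J) (h2 : CondC2 J) (h3 : CondC3 C)
    (hdef : ∀ {A B : C} (f : A ⟶ B), DefinableBySelfIntersections f) :
    ∀ (A : C) (G : Subgroup (Aut A)), Presheaf.IsSheaf J (homQuotPre A G) :=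
  stmt8_general J hJ h1 hdef
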